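/- Let d ≥ 1, let F : ℝ^d → ℝ be differentiable with gradient ∇F that is L-Lipschitz (L ≥ 0) with respect to the Euclidean norm, let w ∈ ℝ^d, η > 0, and let s ∈ {−1,1}^d. Set w' = w − η·s. Then F(w') ≤ F(w) − η·‖∇F(w)‖₁ + (L·η²·d)/2 + 2η·∑_{i=1}^{d} |∂_i F(w)| · 1{ s_i ≠ sign(∂_i F(w)) }, where ‖g‖₁ = ∑_i |g_i| denotes the ℓ₁-norm, ∂_i F(w) is the i-th coordinate of ∇F(w), and 1{·} is the indicator function. -/

import Mathlib

/-!
The standard descent lemma `F (x + v) ≤ F x + ⟪∇F x, v⟫ + (L/2)‖v‖²` for an `L`-Lipschitz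
gradient, applied with `v = -η s`. Since every `s i = ±1`, we have `‖s‖² = d`, and the linear
term is exact: `g i * s i` equals `|g i|` when `s i = sign (g i)` and `-|g i|` otherwise, so `⟪g, -η s⟫ = -η‖g‖₁ + 2η ∑ |g i| 1{s i ≠ sign (g i)}`.
-/

open RealInnerProductSpace

theorem le_add_inner_add_of_hasGradientAt_of_lipschitz {E : Type*} [NormedAddCommGroup E]
    [InnerProductSpace ℝ E] [CompleteSpace E] {F : E → ℝ} {g : E → E} {L : ℝ}
    (hgrad : ∀ x, HasGradientAt F (g x) x) (hlip : ∀ x y, ‖g x - g y‖ ≤ L * ‖x - y‖)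
    (x v : E) : F (x + v) ≤ F x + ⟪g x, v⟫ + L / 2 * ‖v‖ ^ 2 := by
  -- `φ` is antitone on `[0, 1]`, and `φ 1 ≤ φ 0` is the claim.
  set φ : ℝ → ℝ := fun t => F (x + t • v) - t * ⟪g x, v⟫ - L * t ^ 2 / 2 * ‖v‖ ^ 2
  have hφ' : ∀ t, HasDerivAt φ (⟪g (x + t • v), v⟫ - ⟪g x, v⟫ - L * t * ‖v‖ ^ 2) t := by
    intro t
    have hline : HasDerivAt (fun t : ℝ => x + t • v) v t := by
      simpa using ((hasDerivAt_id t).smul_const v).const_add x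
    have hF : HasDerivAt (fun t : ℝ => F (x + t • v)) ⟪g (x + t • v), v⟫ t :=
      (hasGradientAt_iff_hasFDerivAt.mp (hgrad _)).comp_hasDerivAt t hline
    have hsq : HasDerivAt (fun t : ℝ => L * t ^ 2 / 2 * ‖v‖ ^ 2) (L * t * ‖v‖ ^ 2) t :=
      (((hasDerivAt_pow 2 t).const_mul L).div_const 2).mul_const _ |>.congr_deriv
        (by push_cast; ring)
    exact (hF.sub ((hasDerivAt_id t).mul_const _)).sub hsq |>.congr_deriv (by simp)
  have hφ'_nonpos : ∀ t ∈ interior (Set.Icc (0 : ℝ) 1),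
      ⟪g (x + t • v), v⟫ - ⟪g x, v⟫ - L * t * ‖v‖ ^ 2 ≤ 0 := by
    intro t ht
    rw [interior_Icc] at ht
    rw [sub_nonpos]
    have hgap : ‖g (x + t • v) - g x‖ ≤ L * t * ‖v‖ := by
      simpa [norm_smul, abs_of_pos ht.1, mul_assoc] using hlip (x + t • v) x
    calc ⟪g (x + t • v), v⟫ - ⟪g x, v⟫ = ⟪g (x + t • v) - g x, v⟫ := (inner_sub_left ..).symm
      _ ≤ ‖g (x + t • v) - g x‖ * ‖v‖ := real_inner_le_norm _ _
      _ ≤ L * t * ‖v‖ * ‖v‖ := by gcongr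
      _ = L * t * ‖v‖ ^ 2 := by ring
  have hanti : AntitoneOn φ (Set.Icc 0 1) :=
    antitoneOn_of_hasDerivWithinAt_nonpos (convex_Icc 0 1)
      (fun t _ => (hφ' t).continuousAt.continuousWithinAt)
      (fun t _ => (hφ' t).hasDerivWithinAt) hφ'_nonpos
  have h10 := hanti (by simp) (by simp) zero_le_one
  simp only [φ, zero_smul, add_zero, one_smul, zero_mul, one_mul, sub_zero] at h10
  linarith

theorem EuclideanSpace.norm_sq_eq_card_of_forall_eq_one_or_neg_one {ι : Type*} [Fintype ι]
    {s : EuclideanSpace ℝ ι} (hs : ∀ i, s i = 1 ∨ s i = -1) : ‖s‖ ^ 2 = Fintype.card ι := by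
  rw [EuclideanSpace.real_norm_sq_eq]
  have hsq : ∀ i, s i ^ 2 = 1 := fun i => by rcases hs i with h | h <;> simp [h]
  simp [hsq]

theorem Real.mul_eq_abs_sub_of_eq_one_or_neg_one {a s : ℝ} (hs : s = 1 ∨ s = -1) :
    a * s = |a| - 2 * (|a| * if s ≠ Real.sign a then 1 else 0) := by
  rcases lt_trichotomy a 0 with ha | rfl | ha
  · rcases hs with rfl | rfl
    · norm_num [Real.sign_of_neg ha, abs_of_neg ha]; ring
    · simp [Real.sign_of_neg ha, abs_of_neg ha]
  · simp
  · rcases hs with rfl | rfl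
    · simp [Real.sign_of_pos ha, abs_of_pos ha]
    · norm_num [Real.sign_of_pos ha, abs_of_pos ha]; ring

theorem stmt_9 (d : ℕ) (L : ℝ)
    (F : EuclideanSpace ℝ (Fin d) → ℝ)
    (g : EuclideanSpace ℝ (Fin d) → EuclideanSpace ℝ (Fin d))
    (hgrad : ∀ w, HasGradientAt F (g w) w)
    (hlip : ∀ w₁ w₂, ‖g w₁ - g w₂‖ ≤ L * ‖w₁ - w₂‖)
    (w : EuclideanSpace ℝ (Fin d)) (η : ℝ)
    (s : EuclideanSpace ℝ (Fin d)) (hs : ∀ i, s i = 1 ∨ s i = -1)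
    (w' : EuclideanSpace ℝ (Fin d)) (hw' : w' = w - η • s) :
    F w' ≤ F w - η * (∑ i, |g w i|) + L * η ^ 2 * d / 2 +
      2 * η * ∑ i, |g w i| * (if s i ≠ Real.sign (g w i) then 1 else 0) := by
  have hdescent := le_add_inner_add_of_hasGradientAt_of_lipschitz hgrad hlip w (-(η • s))
  rw [← sub_eq_add_neg, ← hw'] at hdescent
  have hinner : ⟪g w, -(η • s)⟫ = -η * ∑ i, |g w i| +
      2 * η * ∑ i, |g w i| * (if s i ≠ Real.sign (g w i) then 1 else 0) := by
    rw [inner_neg_right, real_inner_smul_right, PiLp.inner_apply]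
    simp only [RCLike.inner_apply, conj_trivial, fun i => mul_comm (s i) (g w i),
      Real.mul_eq_abs_sub_of_eq_one_or_neg_one (hs _), Finset.sum_sub_distrib, ← Finset.mul_sum]
    ring
  have hnorm : ‖-(η • s)‖ ^ 2 = η ^ 2 * d := by
    rw [norm_neg, norm_smul, mul_pow, EuclideanSpace.norm_sq_eq_card_of_forall_eq_one_or_neg_one hs,
      Real.norm_eq_abs, sq_abs, Fintype.card_fin]
  rw [hinner, hnorm] at hdescent
  linarith
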